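/- (The upper bounds λ_k ≤ 1 in the dual problem are without loss of generality.) Assume μ_i((−∞,0]) = 0 for all i ∈ I and m_k ≥ 0 for all k ∈ K. Let λ ∈ ℝ^K with λ ≥ 0 componentwise, and define λ' ∈ ℝ^K by λ'_k := min(λ_k, 1) for each k ∈ K. Then L*(λ') ≤ L*(λ). -/

import Mathlib

/-! Truncate `λ` to `λ' = min λ 1` and, given a feasible `(x, b)`, drop the edges of every
campaign with `λ_k > 1` from `x`. Because competing bids are positive, the profit `s x f(r, b)`
of an edge is at most its spend `r s x ρ(b)`, so under `λ'` such a campaign contributes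
`P_k + (m_k - S_k) ≤ m_k`, whereas emptied it contributes `λ_k m_k ≥ m_k` under `λ`; the other
campaigns are untouched. Thus every value of `L(·, ·, λ')` is dominated by a value of
`L(·, ·, λ)`, and the bound `L ≤ Σ_e r_e s_e + Σ_k λ_k m_k` makes the supremum `L*(λ)` finite. -/

open MeasureTheory Finset

variable {I K : Type*}

/-- `fwin μ i a b = ∫ (a − t)·1_{(−∞,b]}(t) dμ_i(t)`: expected utility of bidding `b`
with valuation `a` in a second-price auction against highest competing bid with law `μ i`. -/
noncomputable def fwin (μ : I → Measure ℝ) (i : I) (a b : ℝ) : ℝ :=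
  ∫ t in Set.Iic b, (a - t) ∂(μ i)

/-- `rho μ i b = μ_i((−∞,b])`: the probability of winning the auction with bid `b`. -/
noncomputable def rho (μ : I → Measure ℝ) (i : I) (b : ℝ) : ℝ :=
  ((μ i) (Set.Iic b)).toReal

variable [Fintype I] [Fintype K] [DecidableEq I] [DecidableEq K]

/-- The allocation polytope `S`. -/
def alloc (E : Finset (I × K)) : Set ((I × K) → ℝ) :=
  {x | (∀ e ∈ E, 0 ≤ x e) ∧
    ∀ i : I, ∑ e ∈ E.filter (fun e => e.1 = i), x e ≤ 1}

/-- The profit objective `π(x,b)`. -/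
noncomputable def profit (E : Finset (I × K)) (μ : I → Measure ℝ) (s : I → ℝ)
    (r : I × K → ℝ) (x b : (I × K) → ℝ) : ℝ :=
  ∑ e ∈ E, s e.1 * x e * fwin μ e.1 (r e) (b e)

/-- Expected spend of campaign `k`: `Σ_{i ∈ I_k} r_ik · s_i · x_ik · ρ_i(b_ik)`. -/
noncomputable def spend (E : Finset (I × K)) (μ : I → Measure ℝ) (s : I → ℝ)
    (r : I × K → ℝ) (x b : (I × K) → ℝ) (k : K) : ℝ :=
  ∑ e ∈ E.filter (fun e => e.2 = k), r e * s e.1 * x e * rho μ e.1 (b e)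

/-- The Lagrangian `L(x,b,λ)`. -/
noncomputable def Lag (E : Finset (I × K)) (μ : I → Measure ℝ) (s : I → ℝ)
    (r : I × K → ℝ) (m : K → ℝ) (x b : (I × K) → ℝ) (lam : K → ℝ) : ℝ :=
  profit E μ s r x b + ∑ k : K, lam k * (m k - spend E μ s r x b k)

/-- The dual function `L*(λ) = sup {L(x,b,λ) : x ∈ S, b ≥ 0}`. -/
noncomputable def Lstar (E : Finset (I × K)) (μ : I → Measure ℝ) (s : I → ℝ)
    (r : I × K → ℝ) (m : K → ℝ) (lam : K → ℝ) : ℝ :=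
  sSup {v : ℝ | ∃ x b : (I × K) → ℝ,
    x ∈ alloc E ∧ (∀ e ∈ E, 0 ≤ b e) ∧ v = Lag E μ s r m x b lam}

theorem setIntegral_const_sub_le {ν : Measure ℝ} [IsFiniteMeasure ν]
    (hν : Integrable (fun t => t) ν) (hν0 : ∀ᵐ t ∂ν, 0 ≤ t) (a : ℝ) (A : Set ℝ) :
    ∫ t in A, (a - t) ∂ν ≤ a * ν.real A := by
  rw [integral_sub (integrable_const a) hν.restrict, setIntegral_const, smul_eq_mul, mul_comm]
  have : 0 ≤ ∫ t in A, t ∂ν := integral_nonneg_of_ae (ae_restrict_of_ae hν0)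
  linarith

section Alloc

omit [Fintype I] [Fintype K] [DecidableEq K]

variable {E : Finset (I × K)} {x : I × K → ℝ}

theorem le_one_of_mem_alloc (hx : x ∈ alloc E) {e : I × K} (he : e ∈ E) : x e ≤ 1 :=
  calc x e ≤ ∑ f ∈ E.filter (fun f => f.1 = e.1), x f :=
        single_le_sum (fun f hf => hx.1 f (mem_filter.1 hf).1) (mem_filter.2 ⟨he, rfl⟩)
    _ ≤ 1 := hx.2 e.1

theorem indicator_mem_alloc (hx : x ∈ alloc E) (T : Set (I × K)) : T.indicator x ∈ alloc E :=
  ⟨fun e he => Set.indicator_apply_nonneg fun _ => hx.1 e he,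
    fun i => (sum_le_sum fun e he =>
      Set.indicator_apply_le' (fun _ => le_rfl) fun _ => hx.1 e (mem_filter.1 he).1).trans
      (hx.2 i)⟩

end Alloc

section Campaign

omit [Fintype I] [Fintype K] [DecidableEq I]

variable (E : Finset (I × K)) (μ : I → Measure ℝ) (s : I → ℝ) (r : I × K → ℝ)

noncomputable def campaignProfit (x b : I × K → ℝ) (k : K) : ℝ :=
  ∑ e ∈ E.filter (fun e => e.2 = k), s e.1 * x e * fwin μ e.1 (r e) (b e)

variable {E μ s r} {x y : I × K → ℝ} (b : I × K → ℝ) (k : K)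

theorem campaignProfit_congr (h : ∀ e ∈ E, e.2 = k → x e = y e) :
    campaignProfit E μ s r x b k = campaignProfit E μ s r y b k :=
  sum_congr rfl fun e he => by rw [h e (mem_filter.1 he).1 (mem_filter.1 he).2]

theorem spend_congr (h : ∀ e ∈ E, e.2 = k → x e = y e) :
    spend E μ s r x b k = spend E μ s r y b k :=
  sum_congr rfl fun e he => by rw [h e (mem_filter.1 he).1 (mem_filter.1 he).2]

theorem campaignProfit_zero : campaignProfit E μ s r 0 b k = 0 := by
  simp [campaignProfit]

theorem spend_zero : spend E μ s r 0 b k = 0 := by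
  simp [spend]

theorem spend_nonneg (hs : ∀ i, 0 ≤ s i) (hr : ∀ e ∈ E, 0 ≤ r e) (hx : ∀ e ∈ E, 0 ≤ x e) :
    0 ≤ spend E μ s r x b k :=
  sum_nonneg fun e he =>
    have heE := (mem_filter.1 he).1
    mul_nonneg (mul_nonneg (mul_nonneg (hr e heE) (hs e.1)) (hx e heE)) measureReal_nonneg

theorem spend_le_sum [∀ i, IsProbabilityMeasure (μ i)] (hs : ∀ i, 0 ≤ s i)
    (hr : ∀ e ∈ E, 0 ≤ r e) (hx0 : ∀ e ∈ E, 0 ≤ x e) (hx1 : ∀ e ∈ E, x e ≤ 1) :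
    spend E μ s r x b k ≤ ∑ e ∈ E.filter (fun e => e.2 = k), r e * s e.1 :=
  sum_le_sum fun e he =>
    have heE := (mem_filter.1 he).1
    have hrs := mul_nonneg (hr e heE) (hs e.1)
    (mul_le_of_le_one_right (mul_nonneg hrs (hx0 e heE)) measureReal_le_one).trans
      (mul_le_of_le_one_right hrs (hx1 e heE))

theorem campaignProfit_le_spend [∀ i, IsFiniteMeasure (μ i)]
    (hμ : ∀ i, Integrable (fun t => t) (μ i)) (hμ0 : ∀ i, ∀ᵐ t ∂(μ i), 0 ≤ t)
    (hs : ∀ i, 0 ≤ s i) (hx : ∀ e ∈ E, 0 ≤ x e) :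
    campaignProfit E μ s r x b k ≤ spend E μ s r x b k :=
  sum_le_sum fun e he =>
    calc s e.1 * x e * fwin μ e.1 (r e) (b e)
        ≤ s e.1 * x e * (r e * rho μ e.1 (b e)) :=
          mul_le_mul_of_nonneg_left (setIntegral_const_sub_le (hμ e.1) (hμ0 e.1) _ _)
            (mul_nonneg (hs e.1) (hx e (mem_filter.1 he).1))
      _ = r e * s e.1 * x e * rho μ e.1 (b e) := by ring

end Campaign

section Lagrangian

omit [Fintype I]

variable {E : Finset (I × K)} {μ : I → Measure ℝ} {s : I → ℝ} {r : I × K → ℝ} {m : K → ℝ}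
  {x : I × K → ℝ} (b : I × K → ℝ) (lam : K → ℝ)

omit [DecidableEq I] in
theorem Lag_eq_sum_campaign :
    Lag E μ s r m x b lam =
      ∑ k, (campaignProfit E μ s r x b k + lam k * (m k - spend E μ s r x b k)) := by
  rw [Lag, profit, ← sum_fiberwise E Prod.snd, ← sum_add_distrib]
  rfl

theorem Lag_le_of_mem_alloc [∀ i, IsProbabilityMeasure (μ i)]
    (hμ : ∀ i, Integrable (fun t => t) (μ i)) (hμ0 : ∀ i, ∀ᵐ t ∂(μ i), 0 ≤ t)
    (hs : ∀ i, 0 ≤ s i) (hr : ∀ e ∈ E, 0 ≤ r e) (hlam : ∀ k, 0 ≤ lam k) (hx : x ∈ alloc E) :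
    Lag E μ s r m x b lam ≤
      ∑ k, (∑ e ∈ E.filter (fun e => e.2 = k), r e * s e.1 + lam k * m k) := by
  rw [Lag_eq_sum_campaign]
  refine sum_le_sum fun k _ => ?_
  have hP : campaignProfit E μ s r x b k ≤ spend E μ s r x b k :=
    campaignProfit_le_spend b k hμ hμ0 hs hx.1
  have hS := spend_le_sum (μ := μ) b k hs hr hx.1 fun e he => le_one_of_mem_alloc hx he
  have hlamS := mul_nonneg (hlam k) (spend_nonneg (μ := μ) b k hs hr hx.1)
  linarith [mul_sub (lam k) (m k) (spend E μ s r x b k)]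

theorem Lag_min_one_le_Lag_indicator [∀ i, IsFiniteMeasure (μ i)]
    (hμ : ∀ i, Integrable (fun t => t) (μ i)) (hμ0 : ∀ i, ∀ᵐ t ∂(μ i), 0 ≤ t)
    (hs : ∀ i, 0 ≤ s i) (hm : ∀ k, 0 ≤ m k) (hx : x ∈ alloc E) :
    Lag E μ s r m x b (fun k => min (lam k) 1) ≤
      Lag E μ s r m ({e | lam e.2 ≤ 1}.indicator x) b lam := by
  rw [Lag_eq_sum_campaign, Lag_eq_sum_campaign]
  refine sum_le_sum fun k _ => ?_
  rcases le_or_gt (lam k) 1 with hk | hk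
  · have hxk : ∀ e ∈ E, e.2 = k → {e | lam e.2 ≤ 1}.indicator x e = x e := by
      rintro e - rfl
      exact Set.indicator_of_mem (s := {e : I × K | lam e.2 ≤ 1}) hk x
    rw [min_eq_left hk, campaignProfit_congr b k hxk, spend_congr b k hxk]
  · have hxk : ∀ e ∈ E, e.2 = k → {e | lam e.2 ≤ 1}.indicator x e = 0 := by
      rintro e - rfl
      exact Set.indicator_of_notMem (s := {e : I × K | lam e.2 ≤ 1}) hk.not_ge x
    have hP : campaignProfit E μ s r x b k ≤ spend E μ s r x b k :=
      campaignProfit_le_spend b k hμ hμ0 hs hx.1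
    rw [min_eq_right hk.le, campaignProfit_congr (y := 0) b k hxk, spend_congr (y := 0) b k hxk,
      campaignProfit_zero, spend_zero]
    linarith [le_mul_of_one_le_left (hm k) hk.le]

end Lagrangian

/-- The upper bounds `λ_k ≤ 1` in the dual problem are without loss of generality: with
`m_k ≥ 0` and highest competing bids strictly positive almost surely, truncating any
`λ ≥ 0` componentwise at `1` can only improve (not increase) the dual function value:
`L*(min(λ, 1)) ≤ L*(λ)`. -/
theorem stmt_13 (E : Finset (I × K)) (μ : I → Measure ℝ)
    [∀ i, IsProbabilityMeasure (μ i)]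
    (hμ : ∀ i, Integrable (fun t => t) (μ i))
    (hμ0 : ∀ i, μ i (Set.Iic 0) = 0)
    (s : I → ℝ) (hs : ∀ i, 0 ≤ s i)
    (r : I × K → ℝ) (hr : ∀ e ∈ E, 0 ≤ r e)
    (m : K → ℝ) (hm : ∀ k, 0 ≤ m k)
    (lam : K → ℝ) (hlam : ∀ k, 0 ≤ lam k) :
    Lstar E μ s r m (fun k => min (lam k) 1) ≤ Lstar E μ s r m lam := by
  have hpos : ∀ i, ∀ᵐ t ∂(μ i), 0 ≤ t := fun i =>
    ae_iff.2 (measure_mono_null (fun t ht => (not_le.1 ht).le) (hμ0 i))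
  have hbdd : BddAbove {v : ℝ | ∃ x b : (I × K) → ℝ,
      x ∈ alloc E ∧ (∀ e ∈ E, 0 ≤ b e) ∧ v = Lag E μ s r m x b lam} := by
    refine ⟨∑ k, (∑ e ∈ E.filter (fun e => e.2 = k), r e * s e.1 + lam k * m k), ?_⟩
    rintro v ⟨x, b, hx, -, rfl⟩
    exact Lag_le_of_mem_alloc b lam hμ hpos hs hr hlam hx
  refine csSup_le ⟨_, 0, 0, ⟨fun _ _ => le_rfl, fun _ => by simp⟩, fun _ _ => le_rfl, rfl⟩ ?_
  rintro v ⟨x, b, hx, hb, rfl⟩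
  exact (Lag_min_one_le_Lag_indicator b lam hμ hpos hs hm hx).trans
    (le_csSup hbdd ⟨_, b, indicator_mem_alloc hx _, hb, rfl⟩)
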